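/- Let r : ℝ → ℝ be continuously differentiable with bounded derivative, and let G_σ(a; μ) denote the density of N(μ, σ²). Then lim_{σ → 0} (1/(2σ²)) · E_{a ~ N(μ,σ²)}[(a - μ)·r(a)] exists and equals r'(μ)/2. -/

import Mathlib

/-!
Write `a = μ + σ z` with `z` standard normal. Since `E z = 0`, the constant `r μ` may be subtracted,
so the quantity equals `½ E[z (r (μ + σ z) - r μ) / σ]`. The difference quotient tends to
`r'(μ) z` and, `r` being `C`-Lipschitz, the integrand is dominated by `C z²`; dominated convergence
gives the limit `½ r'(μ) E[z²] = r'(μ) / 2`.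
-/

open MeasureTheory Filter ProbabilityTheory
open scoped NNReal Topology

lemma integral_gaussianReal_eq_integral_gaussianReal_zero_one {E : Type*} [NormedAddCommGroup E]
    [NormedSpace ℝ E] (f : ℝ → E) (μ : ℝ) {σ : ℝ} (hσ : σ ≠ 0) :
    ∫ x, f x ∂gaussianReal μ (σ ^ 2).toNNReal = ∫ z, f (μ + σ * z) ∂gaussianReal 0 1 := by
  have hmap : (gaussianReal 0 1).map ((μ + ·) ∘ (σ * ·)) = gaussianReal μ (σ ^ 2).toNNReal := by
    rw [← Measure.map_map (measurable_const_add μ) (measurable_const_mul σ),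
      gaussianReal_map_const_mul, gaussianReal_map_const_add]
    congr
    · simp
    · ext; simp [sq_nonneg]
  rw [← hmap,
    ((measurableEmbedding_addLeft μ).comp (measurableEmbedding_mulLeft₀ hσ)).integral_map]
  rfl

lemma integrable_sq_gaussianReal (μ : ℝ) (v : ℝ≥0) :
    Integrable (fun x => x ^ 2) (gaussianReal μ v) :=
  (memLp_id_gaussianReal 2).integrable_sq

lemma integrable_fun_id_gaussianReal (μ : ℝ) (v : ℝ≥0) :
    Integrable (fun x => x) (gaussianReal μ v) :=
  (memLp_id_gaussianReal 1).integrable le_rfl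

lemma integral_sq_gaussianReal_zero (v : ℝ≥0) : ∫ x, x ^ 2 ∂gaussianReal 0 v = v := by
  rw [← variance_fun_id_gaussianReal (μ := 0),
    variance_of_integral_eq_zero aemeasurable_id' integral_id_gaussianReal]

lemma LipschitzWith.abs_mul_sub_div_le {f : ℝ → ℝ} {K : ℝ≥0} (hf : LipschitzWith K f)
    (μ σ z : ℝ) :
    |z * ((f (μ + σ * z) - f μ) / σ)| ≤ K * z ^ 2 := by
  rcases eq_or_ne σ 0 with rfl | hσ
  · simp only [div_zero, mul_zero, abs_zero]
    positivity
  have hlip : |f (μ + σ * z) - f μ| ≤ K * (|σ| * |z|) := by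
    simpa [Real.dist_eq, abs_mul] using hf.dist_le_mul (μ + σ * z) μ
  rw [abs_mul, abs_div, ← sq_abs z]
  calc |z| * (|f (μ + σ * z) - f μ| / |σ|) ≤ |z| * (K * (|σ| * |z|) / |σ|) := by gcongr
    _ = K * |z| ^ 2 := by field_simp

lemma LipschitzWith.integrable_mul_sub_div_gaussianReal {f : ℝ → ℝ} {K : ℝ≥0}
    (hf : LipschitzWith K f) (μ σ : ℝ) :
    Integrable (fun z => z * ((f (μ + σ * z) - f μ) / σ)) (gaussianReal 0 1) := by
  have := hf.continuous
  exact ((integrable_sq_gaussianReal 0 1).const_mul K).mono'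
    (Continuous.aestronglyMeasurable (by fun_prop)) (ae_of_all _ (hf.abs_mul_sub_div_le μ σ))

theorem LipschitzWith.tendsto_integral_mul_sub_div_gaussianReal {f : ℝ → ℝ} {K : ℝ≥0}
    (hf : LipschitzWith K f) {μ f' : ℝ} (hf' : HasDerivAt f f' μ) :
    Tendsto (fun σ => ∫ z, z * ((f (μ + σ * z) - f μ) / σ) ∂gaussianReal 0 1) (𝓝[≠] 0) (𝓝 f') := by
  have hlim : ∫ z, z * (f' * z) ∂gaussianReal 0 1 = f' := by
    simp_rw [mul_left_comm _ f', ← sq]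
    simp [integral_const_mul, integral_sq_gaussianReal_zero]
  rw [← hlim]
  refine tendsto_integral_filter_of_dominated_convergence (fun z => K * z ^ 2)
    (Eventually.of_forall fun σ =>
      (hf.integrable_mul_sub_div_gaussianReal μ σ).aestronglyMeasurable)
    (Eventually.of_forall fun σ => ae_of_all _ (hf.abs_mul_sub_div_le μ σ))
    ((integrable_sq_gaussianReal 0 1).const_mul K) (ae_of_all _ fun z => ?_)
  have hline : HasDerivAt (fun σ => f (μ + σ * z)) (f' * z) 0 :=
    hf'.comp_of_eq (0 : ℝ) ((hasDerivAt_mul_const z).const_add μ) (by simp)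
  refine (hline.tendsto_slope_zero.const_mul z).congr fun σ => ?_
  simp [div_eq_inv_mul]

lemma integral_sub_mul_mul_gaussianPDFReal {f : ℝ → ℝ} {K : ℝ≥0} (hf : LipschitzWith K f)
    (μ : ℝ) {σ : ℝ} (hσ : σ ≠ 0) :
    ∫ a, (a - μ) * f a * gaussianPDFReal μ (σ ^ 2).toNNReal a =
      σ ^ 2 * ∫ z, z * ((f (μ + σ * z) - f μ) / σ) ∂gaussianReal 0 1 := by
  have hv : (σ ^ 2).toNNReal ≠ 0 := by simpa using hσ
  calc ∫ a, (a - μ) * f a * gaussianPDFReal μ (σ ^ 2).toNNReal a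
      = ∫ a, (a - μ) * f a ∂gaussianReal μ (σ ^ 2).toNNReal := by
        simp_rw [integral_gaussianReal_eq_integral_smul hv, smul_eq_mul, mul_comm]
    _ = ∫ z, σ ^ 2 * (z * ((f (μ + σ * z) - f μ) / σ)) + σ * f μ * z ∂gaussianReal 0 1 := by
        rw [integral_gaussianReal_eq_integral_gaussianReal_zero_one _ μ hσ]
        congr with z
        field_simp
        ring
    _ = σ ^ 2 * ∫ z, z * ((f (μ + σ * z) - f μ) / σ) ∂gaussianReal 0 1 := by
        rw [integral_add ((hf.integrable_mul_sub_div_gaussianReal μ σ).const_mul _)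
          ((integrable_fun_id_gaussianReal 0 1).const_mul _),
          integral_const_mul, integral_const_mul, integral_id_gaussianReal, mul_zero, add_zero]

/-- As σ → 0⁺, (1/(2σ²))·E_{a ~ N(μ,σ²)}[(a-μ)·r(a)] converges to r'(μ)/2 for a
continuously differentiable reward r with bounded derivative. -/
theorem gaussian_policy_gradient_limit
    (r : ℝ → ℝ) (hr : ContDiff ℝ 1 r)
    (C : ℝ) (hC : ∀ x, |deriv r x| ≤ C) (μ : ℝ) :
    Tendsto
      (fun σ : ℝ => (1 / (2 * σ ^ 2)) *
        ∫ a, (a - μ) * r a *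
          ((Real.sqrt (2 * Real.pi * σ ^ 2))⁻¹ *
            Real.exp (-(a - μ) ^ 2 / (2 * σ ^ 2))))
      (nhdsWithin 0 (Set.Ioi 0)) (nhds (deriv r μ / 2)) := by
  have hrd : Differentiable ℝ r := hr.differentiable one_ne_zero
  have hlip : LipschitzWith C.toNNReal r :=
    lipschitzWith_of_nnnorm_deriv_le hrd fun x => by
      rw [← NNReal.coe_le_coe, coe_nnnorm]
      exact (hC x).trans (Real.le_coe_toNNReal C)
  have hquot := (hlip.tendsto_integral_mul_sub_div_gaussianReal (hrd μ).hasDerivAt).mono_left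
    (nhdsWithin_mono 0 fun σ (hσ : 0 < σ) => hσ.ne')
  rw [div_eq_inv_mul]
  refine (hquot.const_mul 2⁻¹).congr' ?_
  filter_upwards [self_mem_nhdsWithin] with σ (hσ : 0 < σ)
  have hpdf : ∀ a, (Real.sqrt (2 * Real.pi * σ ^ 2))⁻¹ * Real.exp (-(a - μ) ^ 2 / (2 * σ ^ 2))
      = gaussianPDFReal μ (σ ^ 2).toNNReal a := by
    simp [gaussianPDFReal, sq_nonneg]
  simp_rw [hpdf, integral_sub_mul_mul_gaussianPDFReal hlip μ hσ.ne', ← mul_assoc]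
  congr 1
  field_simp
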